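/- For the cycle graph Circ_n on n ≥ 3 vertices, the number of κ-equivalence classes of acyclic orientations equals n − 1, i.e., κ(Circ_n) = n − 1. -/

import Mathlib

/-- An orientation of a simple graph: a choice of direction for each edge. -/
structure GraphOrientation {V : Type*} (G : SimpleGraph V) where
  dir : V → V → Prop
  consistent : ∀ u v, G.Adj u v ↔ (dir u v ∨ dir v u)
  asymm : ∀ u v, dir u v → ¬ dir v u

/-- An orientation is acyclic if its directed graph has no directed cycle. -/
def GraphOrientation.IsAcyclic {V : Type*} {G : SimpleGraph V} (O : GraphOrientation G) : Prop :=
  ∀ v, ¬ Relation.TransGen O.dir v v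

/-- The type of acyclic orientations of `G`. -/
def AcycGraphOrientation {V : Type*} (G : SimpleGraph V) := {O : GraphOrientation G // O.IsAcyclic}

/-- `Click O O'` holds when `O'` is obtained from `O` by a source-to-sink operation:
reversing all edges incident to some source vertex `v`. -/
def Click {V : Type*} {G : SimpleGraph V} (O O' : GraphOrientation G) : Prop :=
  ∃ v, (∀ u, ¬ O.dir u v) ∧
    ∀ u w, O'.dir u w ↔ (((u = v ∨ w = v) ∧ O.dir w u) ∨ (u ≠ v ∧ w ≠ v ∧ O.dir u w))

/-- κ(G): the number of equivalence classes of acyclic orientations of `G` under the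
equivalence generated by source-to-sink operations. -/
noncomputable def kappa {V : Type*} (G : SimpleGraph V) : ℕ :=
  Nat.card (Quot (fun A B : AcycGraphOrientation G => Click A.1 B.1))

/-!
An orientation of the `n`-cycle is determined by the set `S` of vertices `i` whose edge
`{i, i + 1}` points from `i` to `i + 1`. A directed path can never turn back along the edge it
just used, so a directed cycle has to run all the way round in one direction: the orientation is
acyclic iff `0 < #S < n`. A vertex `v` is a source iff `v ∈ S` and `v - 1 ∉ S`, and reversing it
replaces `v` by `v - 1` in `S`; so `#S` is invariant. Conversely, while `S` is not an initial
segment of `Fin n` some `v ≠ 0` is a source, and reversing it lowers the sum of the elements of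
`S`; hence every class contains the orientation whose `S` is the initial segment of size `#S`.
The classes are therefore indexed by `#S ∈ (0, n)`.
-/

open SimpleGraph Finset Relation

attribute [ext] GraphOrientation

theorem Finset.eq_of_isLowerSet_of_card_eq {α : Type*} [LinearOrder α] {s t : Finset α}
    (hs : IsLowerSet (s : Set α)) (ht : IsLowerSet (t : Set α)) (h : #s = #t) : s = t := by
  rcases hs.total ht with hst | hts
  · exact eq_of_subset_of_card_le (coe_subset.mp hst) h.ge
  · exact (eq_of_subset_of_card_le (coe_subset.mp hts) h.le).symm

section

variable {n : ℕ} [NeZero n]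

open scoped Fin.NatCast in
theorem Fin.add_one_induction {P : Fin n → Prop} (a : Fin n) (ha : P a)
    (hP : ∀ u, P u → P (u + 1)) (u : Fin n) : P u := by
  have key : ∀ m : ℕ, P (a + m) := by
    intro m
    induction m with
    | zero => simpa using ha
    | succ m ih => simpa [add_assoc] using hP _ ih
  simpa using key (u - a).val

theorem transGen_self_of_forall_add_one {r : Fin n → Fin n → Prop} (hr : ∀ u, r u (u + 1))
    (a : Fin n) : TransGen r a a := by
  have hreach : ∀ u, ReflTransGen r a u :=
    Fin.add_one_induction a .refl fun u hu => hu.tail (hr u)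
  simpa using TransGen.tail' (hreach (a - 1)) (hr (a - 1))

theorem add_one_add_one_ne_self (hn : 3 ≤ n) (u : Fin n) : u + 1 + 1 ≠ u := by
  obtain ⟨m, rfl⟩ : ∃ m, n = m + 3 := ⟨n - 3, by omega⟩
  rw [add_assoc, Ne, add_eq_left]
  simp [Fin.ext_iff, Fin.val_add, Nat.mod_eq_of_lt (show 2 < m + 3 by omega)]

theorem sub_one_ne_self (hn : 2 ≤ n) (u : Fin n) : u - 1 ≠ u := by
  obtain ⟨m, rfl⟩ : ∃ m, n = m + 2 := ⟨n - 2, by omega⟩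
  rw [Ne, sub_eq_self]
  exact one_ne_zero

theorem cycleGraph_adj_iff (hn : 2 ≤ n) {u v : Fin n} :
    (cycleGraph n).Adj u v ↔ v = u + 1 ∨ u = v + 1 := by
  obtain ⟨m, rfl⟩ : ∃ m, n = m + 2 := ⟨n - 2, by omega⟩
  rw [cycleGraph_adj, sub_eq_iff_eq_add', sub_eq_iff_eq_add', or_comm]

theorem Fin.isLowerSet_of_sub_one_mem {S : Finset (Fin n)}
    (h : ∀ v ∈ S, v ≠ 0 → v - 1 ∈ S) :
    IsLowerSet (S : Set (Fin n)) := by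
  have key : ∀ d : ℕ, ∀ v ∈ S, ∀ w : Fin n, (w : ℕ) + d = v → w ∈ S := by
    intro d
    induction d with
    | zero => exact fun v hv w hw => Fin.ext hw ▸ hv
    | succ d ih =>
      intro v hv w hw
      have hv0 : v ≠ 0 := by rintro rfl; simp at hw
      exact ih (v - 1) (h v hv hv0) w (by rw [Fin.val_sub_one_of_ne_zero hv0]; omega)
  intro v w hwv hv
  exact key (v - w) v hv w (by rw [Fin.le_iff_val_le_val] at hwv; omega)

theorem Fin.sum_val_insert_sub_one_erase {S : Finset (Fin n)} {v : Fin n} (hv : v ∈ S)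
    (hv' : v - 1 ∉ S) (hv0 : v ≠ 0) :
    ∑ i ∈ insert (v - 1) (S.erase v), (i : ℕ) + 1 = ∑ i ∈ S, (i : ℕ) := by
  rw [sum_insert fun h => hv' (mem_of_mem_erase h), Fin.val_sub_one_of_ne_zero hv0,
    ← sum_erase_add _ _ hv]
  have : (v : ℕ) ≠ 0 := Fin.val_ne_zero_iff.mpr hv0
  omega

def ClockwiseStep (S : Finset (Fin n)) (u w : Fin n) : Prop := u ∈ S ∧ w = u + 1

theorem Relation.TransGen.mem_of_clockwiseStep {S : Finset (Fin n)} {u w : Fin n}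
    (h : TransGen (ClockwiseStep S) u w) : u ∈ S := by
  obtain ⟨_, ⟨hu, -⟩, -⟩ := TransGen.head'_iff.mp h
  exact hu

theorem Relation.TransGen.sub_one_mem_of_clockwiseStep {S : Finset (Fin n)} {u w : Fin n}
    (h : TransGen (ClockwiseStep S) u w) : w - 1 ∈ S := by
  obtain ⟨_, -, hu, rfl⟩ := TransGen.tail'_iff.mp h
  simpa using hu

theorem eq_univ_of_transGen_clockwiseStep {S : Finset (Fin n)} {a : Fin n}
    (h : TransGen (ClockwiseStep S) a a) : S = univ := by
  have hcyc : ∀ u, TransGen (ClockwiseStep S) u a := by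
    refine Fin.add_one_induction a h fun u hu => ?_
    obtain ⟨_, ⟨-, rfl⟩, hrest⟩ := TransGen.head'_iff.mp hu
    rcases reflTransGen_iff_eq_or_transGen.mp hrest with heq | hrest
    · rwa [← heq]
    · exact hrest
  exact eq_univ_of_forall fun u => (hcyc u).mem_of_clockwiseStep

theorem transGen_clockwiseStep_or_transGen_compl {S : Finset (Fin n)} {a b : Fin n}
    (h : TransGen (fun u w => ClockwiseStep S u w ∨ ClockwiseStep Sᶜ w u) a b) :
    TransGen (ClockwiseStep S) a b ∨ TransGen (ClockwiseStep Sᶜ) b a := by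
  induction h with
  | single h => exact h.imp .single .single
  | tail _ hbc ih =>
    rcases ih with ih | ih <;> rcases hbc with hbc | hbc
    · exact .inl (ih.tail hbc)
    · have := ih.sub_one_mem_of_clockwiseStep
      rw [hbc.2, add_sub_cancel_right] at this
      exact absurd this (mem_compl.mp hbc.1)
    · exact absurd hbc.1 (mem_compl.mp ih.mem_of_clockwiseStep)
    · exact .inr (ih.head hbc)

end

abbrev clickRel {V : Type*} (G : SimpleGraph V) (A B : AcycGraphOrientation G) : Prop :=
  Click A.1 B.1

namespace GraphOrientation

section Source

variable {V : Type*} {G : SimpleGraph V}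

def sourceToSink (O : GraphOrientation G) (v : V) (hv : ∀ u, ¬ O.dir u v) :
    GraphOrientation G where
  dir u w := ((u = v ∨ w = v) ∧ O.dir w u) ∨ (u ≠ v ∧ w ≠ v ∧ O.dir u w)
  consistent u w := by
    have := hv u
    have := hv w
    rw [O.consistent]
    by_cases hu : u = v <;> by_cases hw : w = v <;> subst_vars <;> tauto
  asymm u w := by
    have := O.asymm u w
    have := O.asymm w u
    tauto

theorem click_sourceToSink (O : GraphOrientation G) (v : V) (hv : ∀ u, ¬ O.dir u v) :
    Click O (O.sourceToSink v hv) :=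
  ⟨v, hv, fun _ _ => Iff.rfl⟩

theorem _root_.Click.exists_eq_sourceToSink {O O' : GraphOrientation G} (h : Click O O') :
    ∃ v hv, O' = O.sourceToSink v hv := by
  obtain ⟨v, hv, hdir⟩ := h
  exact ⟨v, hv, GraphOrientation.ext (funext₂ fun u w => propext (hdir u w))⟩

end Source

variable {n : ℕ} [NeZero n]

open scoped Classical in
noncomputable def clockwiseSet (O : GraphOrientation (cycleGraph n)) : Finset (Fin n) :=
  {i | O.dir i (i + 1)}

section

variable {O : GraphOrientation (cycleGraph n)}

@[simp]
theorem mem_clockwiseSet {i : Fin n} : i ∈ O.clockwiseSet ↔ O.dir i (i + 1) := by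
  simp [clockwiseSet]

theorem dir_iff_clockwiseStep (hn : 3 ≤ n) {u w : Fin n} :
    O.dir u w ↔ ClockwiseStep O.clockwiseSet u w ∨ ClockwiseStep O.clockwiseSetᶜ w u := by
  simp only [ClockwiseStep, mem_compl, mem_clockwiseSet]
  have hadj := O.consistent u w
  have hasymm := O.asymm u w
  rw [cycleGraph_adj_iff (by omega)] at hadj
  constructor
  · intro h
    rcases hadj.mpr (.inl h) with rfl | rfl
    · exact .inl ⟨h, rfl⟩
    · exact .inr ⟨hasymm h, rfl⟩
  · rintro (⟨h, rfl⟩ | ⟨h, rfl⟩)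
    · exact h
    · exact (hadj.mp (.inr rfl)).resolve_right h

theorem dir_eq_clockwiseStep (hn : 3 ≤ n) (O : GraphOrientation (cycleGraph n)) :
    O.dir = fun u w =>
      ClockwiseStep O.clockwiseSet u w ∨ ClockwiseStep O.clockwiseSetᶜ w u := by
  ext u w
  exact dir_iff_clockwiseStep hn

theorem clockwiseSet_injective (hn : 3 ≤ n) :
    Function.Injective (clockwiseSet (n := n)) := by
  intro O O' h
  ext1
  rw [dir_eq_clockwiseStep hn O, dir_eq_clockwiseStep hn O', h]

def ofClockwiseSet (hn : 3 ≤ n) (S : Finset (Fin n)) : GraphOrientation (cycleGraph n) where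
  dir u w := ClockwiseStep S u w ∨ ClockwiseStep Sᶜ w u
  consistent u w := by
    rw [cycleGraph_adj_iff (by omega)]
    by_cases hu : u ∈ S <;> by_cases hw : w ∈ S <;> simp [ClockwiseStep, hu, hw, or_comm]
  asymm u w := by
    rintro (⟨hu, rfl⟩ | ⟨hw, rfl⟩) (⟨h, h'⟩ | ⟨h, h'⟩)
    · exact add_one_add_one_ne_self hn u h'.symm
    · exact mem_compl.mp h hu
    · exact mem_compl.mp hw h
    · exact add_one_add_one_ne_self hn w h'.symm

@[simp]
theorem clockwiseSet_ofClockwiseSet (hn : 3 ≤ n) (S : Finset (Fin n)) :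
    (ofClockwiseSet hn S).clockwiseSet = S := by
  ext i
  simp [ofClockwiseSet, ClockwiseStep, (add_one_add_one_ne_self hn i).symm]

theorem isAcyclic_iff_card_clockwiseSet (hn : 3 ≤ n) :
    O.IsAcyclic ↔ 0 < #O.clockwiseSet ∧ #O.clockwiseSet < n := by
  have hlt : #O.clockwiseSet < n ↔ O.clockwiseSet ≠ univ := by
    simpa using card_lt_iff_ne_univ O.clockwiseSet
  rw [card_pos, hlt]
  constructor
  · intro h
    refine ⟨nonempty_iff_ne_empty.mpr fun hS => h 0 ?_, fun hS => h 0 ?_⟩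
    · refine (transGen_self_of_forall_add_one (fun u => ?_) 0).swap
      exact (dir_iff_clockwiseStep hn).mpr (.inr ⟨by simp [hS], rfl⟩)
    · exact transGen_self_of_forall_add_one (fun u => mem_clockwiseSet.mp (hS ▸ mem_univ u)) 0
  · rintro ⟨hne, hne'⟩ a ha
    rw [dir_eq_clockwiseStep hn O] at ha
    rcases transGen_clockwiseStep_or_transGen_compl ha with h | h
    · exact hne' (eq_univ_of_transGen_clockwiseStep h)
    · exact hne.ne_empty ((compl_eq_univ_iff _).mp (eq_univ_of_transGen_clockwiseStep h))

variable {v : Fin n}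

theorem forall_not_dir_iff (hn : 3 ≤ n) :
    (∀ u, ¬ O.dir u v) ↔ v ∈ O.clockwiseSet ∧ v - 1 ∉ O.clockwiseSet := by
  simp only [dir_iff_clockwiseStep hn, ClockwiseStep, mem_compl, not_or, not_and]
  constructor
  · intro h
    exact ⟨not_not.mp fun hv => (h (v + 1)).2 hv rfl, fun hv => (h (v - 1)).1 hv (by simp)⟩
  · rintro ⟨hv, hv'⟩ u
    exact ⟨fun hu huv => hv' (by rwa [huv, add_sub_cancel_right]), fun hv'' => absurd hv hv''⟩

theorem clockwiseSet_sourceToSink (hn : 3 ≤ n) (hv : ∀ u, ¬ O.dir u v) :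
    (O.sourceToSink v hv).clockwiseSet = insert (v - 1) (O.clockwiseSet.erase v) := by
  ext i
  have hsucc : O.dir v (v - 1) := (dir_iff_clockwiseStep hn).mpr
    (.inr ⟨mem_compl.mpr ((forall_not_dir_iff hn).mp hv).2, by simp⟩)
  simp only [mem_clockwiseSet, sourceToSink, mem_insert, mem_erase, ne_eq, ← eq_sub_iff_add_eq]
  rcases eq_or_ne i v with rfl | hiv
  · simp [hv (i + 1), (sub_one_ne_self (by omega) i).symm]
  · rcases eq_or_ne i (v - 1) with rfl | hiv'
    · simp [hsucc]
    · simp [hiv, hiv']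

theorem card_clockwiseSet_sourceToSink (hn : 3 ≤ n) (hv : ∀ u, ¬ O.dir u v) :
    #(O.sourceToSink v hv).clockwiseSet = #O.clockwiseSet := by
  obtain ⟨hvS, hv1S⟩ := (forall_not_dir_iff hn).mp hv
  rw [clockwiseSet_sourceToSink hn, card_insert_of_notMem (fun h => hv1S (mem_of_mem_erase h)),
    card_erase_add_one hvS]

end

theorem _root_.Click.card_clockwiseSet_eq (hn : 3 ≤ n) {O O' : GraphOrientation (cycleGraph n)}
    (h : Click O O') : #O'.clockwiseSet = #O.clockwiseSet := by
  obtain ⟨v, hv, rfl⟩ := h.exists_eq_sourceToSink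
  exact card_clockwiseSet_sourceToSink hn hv

theorem exists_quot_eq_isLowerSet (hn : 3 ≤ n) (A : AcycGraphOrientation (cycleGraph n)) :
    ∃ B : AcycGraphOrientation (cycleGraph n), Quot.mk (clickRel _) A = Quot.mk _ B ∧
      IsLowerSet (B.1.clockwiseSet : Set (Fin n)) := by
  induction h : ∑ i ∈ A.1.clockwiseSet, (i : ℕ) using Nat.strong_induction_on
    generalizing A with
  | _ k ih =>
    by_cases hlow : IsLowerSet (A.1.clockwiseSet : Set (Fin n))
    · exact ⟨A, rfl, hlow⟩
    obtain ⟨v, hvS, hv0, hv1⟩ :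
        ∃ v ∈ A.1.clockwiseSet, v ≠ 0 ∧ v - 1 ∉ A.1.clockwiseSet := by
      by_contra! hcon
      exact hlow (Fin.isLowerSet_of_sub_one_mem hcon)
    have hv := (forall_not_dir_iff hn).mpr ⟨hvS, hv1⟩
    have hB : (A.1.sourceToSink v hv).IsAcyclic := by
      rw [isAcyclic_iff_card_clockwiseSet hn, card_clockwiseSet_sourceToSink hn hv,
        ← isAcyclic_iff_card_clockwiseSet hn]
      exact A.2
    have hsum := Fin.sum_val_insert_sub_one_erase hvS hv1 hv0
    rw [← clockwiseSet_sourceToSink hn hv] at hsum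
    obtain ⟨C, hBC, hC⟩ := ih _ (by dsimp only; omega) ⟨_, hB⟩ rfl
    have hAB : clickRel _ A ⟨_, hB⟩ := click_sourceToSink A.1 v hv
    exact ⟨C, (Quot.sound hAB).trans hBC, hC⟩

noncomputable def clockwiseCount (hn : 3 ≤ n) : Quot (clickRel (cycleGraph n)) → ℕ :=
  Quot.lift (fun A => #A.1.clockwiseSet) fun _ _ h => (h.card_clockwiseSet_eq hn).symm

theorem clockwiseCount_injective (hn : 3 ≤ n) : Function.Injective (clockwiseCount hn) := by
  rintro ⟨A⟩ ⟨B⟩ h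
  obtain ⟨A', hA, hA'⟩ := exists_quot_eq_isLowerSet hn A
  obtain ⟨B', hB, hB'⟩ := exists_quot_eq_isLowerSet hn B
  rw [hA, hB] at h ⊢
  exact congrArg _ (Subtype.ext (clockwiseSet_injective hn
    (Finset.eq_of_isLowerSet_of_card_eq hA' hB' h)))

theorem range_clockwiseCount (hn : 3 ≤ n) : Set.range (clockwiseCount hn) = Set.Ioo 0 n := by
  ext k
  constructor
  · rintro ⟨⟨A⟩, rfl⟩
    exact (isAcyclic_iff_card_clockwiseSet hn).mp A.2
  · rintro ⟨hk0, hkn⟩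
    obtain ⟨S, -, hS⟩ := exists_subset_card_eq (s := (univ : Finset (Fin n)))
      (by simpa using hkn.le)
    have hacyc : (ofClockwiseSet hn S).IsAcyclic := by
      rw [isAcyclic_iff_card_clockwiseSet hn, clockwiseSet_ofClockwiseSet, hS]
      exact ⟨hk0, hkn⟩
    exact ⟨Quot.mk _ ⟨_, hacyc⟩, by simp [clockwiseCount, hS]⟩

end GraphOrientation

open GraphOrientation in
theorem kappa_cycle_graph (n : ℕ) (hn : 3 ≤ n) :
    kappa (SimpleGraph.cycleGraph n) = n - 1 := by
  have : NeZero n := ⟨by omega⟩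
  rw [kappa, ← Nat.card_range_of_injective (clockwiseCount_injective hn), range_clockwiseCount hn]
  simp
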